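/- Let A be a commutative bimonoid, let b be the complement of a in A, and let n ≥ 1. Then b ≤ bⁿ if and only if n·a ≤ a, where bⁿ denotes the n-fold product b·…·b and n·a denotes the n-fold sum a+…+a. -/

import Mathlib

/-- A commutative bimonoid: a partially ordered set with two commutative
monoid operations, a multiplication `mul` with unit `one` and an addition
`add` with unit `zero`, both monotone in each argument, satisfying the
hemidistributive law `x·(y+z) ≤ (x·y)+z`. -/
structure CommBimonoidOn (A : Type*) [PartialOrder A] where
  mul : A → A → A
  add : A → A → A
  one : A
  zero : A
  mul_assoc : ∀ x y z, mul (mul x y) z = mul x (mul y z)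
  mul_comm : ∀ x y, mul x y = mul y x
  mul_one : ∀ x, mul x one = x
  add_assoc : ∀ x y z, add (add x y) z = add x (add y z)
  add_comm : ∀ x y, add x y = add y x
  add_zero : ∀ x, add x zero = x
  mul_mono : ∀ {x y : A} (z), x ≤ y → mul x z ≤ mul y z
  add_mono : ∀ {x y : A} (z), x ≤ y → add x z ≤ add y z
  hemi : ∀ x y z, mul x (add y z) ≤ add (mul x y) z

/-- `c` is a complement of `a` in the commutative bimonoid `S`. -/
def CommBimonoidOn.IsCompl {A : Type*} [PartialOrder A]
    (S : CommBimonoidOn A) (a c : A) : Prop :=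
  S.mul a c ≤ S.zero ∧ S.one ≤ S.add a c

/-- The `n`-fold product `x·…·x` in a commutative bimonoid (with `x⁰ = 1`). -/
def CommBimonoidOn.pow {A : Type*} [PartialOrder A]
    (S : CommBimonoidOn A) (x : A) : ℕ → A
  | 0 => S.one
  | n + 1 => S.mul x (S.pow x n)

/-- The `n`-fold sum `x+…+x` in a commutative bimonoid (with `0·x = 0`). -/
def CommBimonoidOn.nsum {A : Type*} [PartialOrder A]
    (S : CommBimonoidOn A) (x : A) : ℕ → A
  | 0 => S.zero
  | n + 1 => S.add x (S.nsum x n)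

/-!
From `a·b ≤ 0` and `1 ≤ a + b` together with hemidistributivity one gets
`b·(a + x) ≤ x` and `x ≤ a + b·x` for every `x`. Iterating the second inequality gives
`1 ≤ n·a + bⁿ`, so `n·a ≤ a` yields `1 ≤ a + bⁿ` and hence `b ≤ b·(a + bⁿ) ≤ bⁿ`.
The converse is the same implication in the order-dual bimonoid, where the roles of
multiplication and addition, and of `a` and `b`, are exchanged.
-/

namespace CommBimonoidOn

variable {A : Type*} [PartialOrder A] (S : CommBimonoidOn A)

theorem mul_mono_right (z : A) {x y : A} (h : x ≤ y) : S.mul z x ≤ S.mul z y := by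
  rw [S.mul_comm z x, S.mul_comm z y]
  exact S.mul_mono z h

theorem add_mono_right (z : A) {x y : A} (h : x ≤ y) : S.add z x ≤ S.add z y := by
  rw [S.add_comm z x, S.add_comm z y]
  exact S.add_mono z h

def op : CommBimonoidOn Aᵒᵈ where
  mul := S.add
  add := S.mul
  one := S.zero
  zero := S.one
  mul_assoc := S.add_assoc
  mul_comm := S.add_comm
  mul_one := S.add_zero
  add_assoc := S.mul_assoc
  add_comm := S.mul_comm
  add_zero := S.mul_one
  mul_mono := fun z h => S.add_mono z h
  add_mono := fun z h => S.mul_mono z h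
  hemi := fun x y z => by
    show S.mul (S.add x y) z ≤ S.add x (S.mul y z)
    calc S.mul (S.add x y) z = S.mul z (S.add y x) := by
          rw [S.mul_comm (S.add x y) z, S.add_comm x y]
      _ ≤ S.add (S.mul z y) x := S.hemi z y x
      _ = S.add x (S.mul y z) := by rw [S.add_comm (S.mul z y) x, S.mul_comm z y]

theorem op_pow (x : A) (n : ℕ) : S.op.pow x n = S.nsum x n := by
  induction n with
  | zero => rfl
  | succ n ih => exact congrArg (S.add x) ih

theorem op_nsum (x : A) (n : ℕ) : S.op.nsum x n = S.pow x n := by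
  induction n with
  | zero => rfl
  | succ n ih => exact congrArg (S.mul x) ih

variable {S}

theorem IsCompl.op {a b : A} (hb : S.IsCompl a b) : S.op.IsCompl b a :=
  ⟨show S.one ≤ S.add b a from S.add_comm a b ▸ hb.2,
    show S.mul b a ≤ S.zero from S.mul_comm a b ▸ hb.1⟩

theorem IsCompl.mul_add_le {a b : A} (hb : S.IsCompl a b) (x : A) :
    S.mul b (S.add a x) ≤ x :=
  calc S.mul b (S.add a x) ≤ S.add (S.mul b a) x := S.hemi b a x
    _ ≤ S.add S.zero x := S.add_mono x (S.mul_comm b a ▸ hb.1)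
    _ = x := by rw [S.add_comm, S.add_zero]

theorem IsCompl.le_add_mul {a b : A} (hb : S.IsCompl a b) (x : A) :
    x ≤ S.add a (S.mul b x) :=
  hb.op.mul_add_le x

theorem IsCompl.one_le_nsum_add_pow {a b : A} (hb : S.IsCompl a b) (n : ℕ) :
    S.one ≤ S.add (S.nsum a n) (S.pow b n) := by
  induction n with
  | zero => exact (S.add_comm S.zero S.one ▸ S.add_zero S.one).ge
  | succ n ih =>
    calc S.one ≤ S.add (S.nsum a n) (S.pow b n) := ih
      _ ≤ S.add (S.nsum a n) (S.add a (S.mul b (S.pow b n))) :=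
          S.add_mono_right _ (hb.le_add_mul _)
      _ = S.add (S.nsum a (n + 1)) (S.pow b (n + 1)) := by
          rw [← S.add_assoc, S.add_comm (S.nsum a n) a]; rfl

theorem IsCompl.le_pow_of_nsum_le {a b : A} (hb : S.IsCompl a b) {n : ℕ}
    (h : S.nsum a n ≤ a) : b ≤ S.pow b n :=
  calc b = S.mul b S.one := (S.mul_one b).symm
    _ ≤ S.mul b (S.add a (S.pow b n)) :=
        S.mul_mono_right b ((hb.one_le_nsum_add_pow n).trans (S.add_mono _ h))
    _ ≤ S.pow b n := hb.mul_add_le _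

end CommBimonoidOn

theorem compl_pow_iff_nsum_general {A : Type*} [PartialOrder A]
    (S : CommBimonoidOn A) (a b : A) (hb : S.IsCompl a b)
    (n : ℕ) :
    b ≤ S.pow b n ↔ S.nsum a n ≤ a := by
  refine ⟨fun h => ?_, hb.le_pow_of_nsum_le⟩
  have h_dual : S.op.nsum b n ≤ b := by rw [S.op_nsum]; exact h
  have h_pow := hb.op.le_pow_of_nsum_le h_dual
  rwa [S.op_pow] at h_pow

/-- If `b` is the complement of `a` in a commutative bimonoid and `n ≥ 1`,
then `b ≤ bⁿ` if and only if `n·a ≤ a`. -/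
theorem compl_pow_iff_nsum {A : Type*} [PartialOrder A]
    (S : CommBimonoidOn A) (a b : A) (hb : S.IsCompl a b)
    (n : ℕ) (hn : 1 ≤ n) :
    b ≤ S.pow b n ↔ S.nsum a n ≤ a :=
  compl_pow_iff_nsum_general S a b hb n
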